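/- Let D be a weighted digraph on a finite vertex set V with w(D) > 0. Then mac(D) ≥ l(θ(D))·w(D). -/

import Mathlib

open scoped BigOperators Classical

noncomputable section

namespace PaperStmt

variable {V : Type*} [Fintype V]

/-- Total weight of a weighted digraph given by `w : V → V → ℝ`. -/
def totalWeight (w : V → V → ℝ) : ℝ := ∑ u, ∑ v, w u v

/-- Weight of the dicut `(X, Xᶜ)`. -/
def cutWeight (w : V → V → ℝ) (X : Finset V) : ℝ := ∑ x ∈ X, ∑ y ∈ Xᶜ, w x y

/-- Maximum weight of a directed cut. -/
def mac (w : V → V → ℝ) : ℝ :=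
  Finset.univ.sup' ⟨∅, Finset.mem_univ ∅⟩ (fun X : Finset V => cutWeight w X)

/-- `r(v) = w⁺(v) - w⁻(v)`. -/
def rv (w : V → V → ℝ) (v : V) : ℝ := (∑ u, w v u) - (∑ u, w u v)

/-- `r⁺(D) = ∑_{v : r(v) > 0} r(v)`. -/
def rPlus (w : V → V → ℝ) : ℝ :=
  ∑ v ∈ Finset.univ.filter (fun v => 0 < rv w v), rv w v

/-- The function `l(θ)` from the paper. -/
def lfun (θ : ℝ) : ℝ := if θ < 1 / 3 then 1 / 4 + θ ^ 2 / (4 * (1 - 2 * θ)) else θ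

def Ew (w : V → V → ℝ) (p : V → ℝ) : ℝ := ∑ u, ∑ v, p u * (1 - p v) * w u v

lemma cutWeight_le_mac (w : V → V → ℝ) (X : Finset V) : cutWeight w X ≤ mac w :=
  Finset.le_sup' (fun X : Finset V => cutWeight w X) (Finset.mem_univ X)

lemma Ew_le_mac_of_01 (w : V → V → ℝ) (p : V → ℝ) (hp : ∀ v, p v = 0 ∨ p v = 1) :
    Ew w p ≤ mac w := by
  classical
  have h1 : Ew w p = cutWeight w (Finset.univ.filter (fun v => p v = 1)) := by
    unfold Ew cutWeight
    rw [Finset.sum_filter]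
    refine Finset.sum_congr rfl fun u _ => ?_
    have hcompl : (Finset.univ.filter (fun v => p v = 1))ᶜ
        = Finset.univ.filter (fun v => ¬ p v = 1) := by
      ext x; simp
    rw [hcompl, Finset.sum_filter]
    rcases hp u with hu | hu
    · rw [if_neg (by simp [hu])]
      exact Finset.sum_eq_zero fun v _ => by rw [hu]; ring
    · rw [if_pos hu]
      refine Finset.sum_congr rfl fun v _ => ?_
      rcases hp v with hv | hv
      · rw [if_pos (by simp [hv]), hu, hv]; ring
      · rw [if_neg (by simp [hv]), hu, hv]; ring
  rw [h1]; exact cutWeight_le_mac w _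

lemma Ew_le_mac (w : V → V → ℝ) (hdiag : ∀ v, w v v = 0) (p : V → ℝ)
    (hp : ∀ v, 0 ≤ p v ∧ p v ≤ 1) : Ew w p ≤ mac w := by
  classical
  suffices H : ∀ n (p : V → ℝ), (∀ v, 0 ≤ p v ∧ p v ≤ 1) →
      (Finset.univ.filter fun v => p v ≠ 0 ∧ p v ≠ 1).card ≤ n → Ew w p ≤ mac w from
    H _ p hp le_rfl
  intro n
  induction n with
  | zero =>
    intro p hp hcard
    refine Ew_le_mac_of_01 w p fun v => ?_
    by_contra hv
    push_neg at hv
    have : v ∈ Finset.univ.filter fun v => p v ≠ 0 ∧ p v ≠ 1 := by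
      simp [hv.1, hv.2]
    have := Finset.card_pos.mpr ⟨v, this⟩
    omega
  | succ n ih =>
    intro p hp hcard
    by_cases hex : ∀ v, p v = 0 ∨ p v = 1
    · exact Ew_le_mac_of_01 w p hex
    · push_neg at hex
      obtain ⟨v0, h0, h1⟩ := hex
      set p0 := Function.update p v0 0 with hp0def
      set p1 := Function.update p v0 1 with hp1def
      have hmem : v0 ∈ Finset.univ.filter fun v => p v ≠ 0 ∧ p v ≠ 1 := by
        simp [h0, h1]
      have hcard' : ∀ c : ℝ, (c = 0 ∨ c = 1) →
          (Finset.univ.filter fun v => Function.update p v0 c v ≠ 0 ∧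
            Function.update p v0 c v ≠ 1).card ≤ n := by
        intro c hc
        have hss : (Finset.univ.filter fun v => Function.update p v0 c v ≠ 0 ∧
            Function.update p v0 c v ≠ 1) ⊆
            (Finset.univ.filter fun v => p v ≠ 0 ∧ p v ≠ 1).erase v0 := by
          intro v hv
          simp only [Finset.mem_filter, Function.update_apply] at hv
          rcases eq_or_ne v v0 with h | h
          · rw [if_pos h] at hv
            rcases hc with hc | hc <;> simp [hc] at hv
          · rw [if_neg h] at hv
            exact Finset.mem_erase.mpr ⟨h, by simp [hv.2.1, hv.2.2]⟩
        have := Finset.card_le_card hss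
        rw [Finset.card_erase_of_mem hmem] at this
        omega
      have hbd : ∀ c : ℝ, 0 ≤ c → c ≤ 1 →
          (∀ v, 0 ≤ Function.update p v0 c v ∧ Function.update p v0 c v ≤ 1) := by
        intro c hc0 hc1 v
        rw [Function.update_apply]
        split
        · exact ⟨hc0, hc1⟩
        · exact hp v
      have hE0 : Ew w p0 ≤ mac w := ih p0 (hbd 0 le_rfl zero_le_one) (hcard' 0 (Or.inl rfl))
      have hE1 : Ew w p1 ≤ mac w := ih p1 (hbd 1 zero_le_one le_rfl) (hcard' 1 (Or.inr rfl))
      have haff : Ew w p = (1 - p v0) * Ew w p0 + p v0 * Ew w p1 := by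
        unfold Ew
        rw [Finset.mul_sum, Finset.mul_sum, ← Finset.sum_add_distrib]
        refine Finset.sum_congr rfl fun u _ => ?_
        rw [Finset.mul_sum, Finset.mul_sum, ← Finset.sum_add_distrib]
        refine Finset.sum_congr rfl fun v _ => ?_
        rcases eq_or_ne u v0 with hu | hu <;> rcases eq_or_ne v v0 with hv | hv <;>
            simp [hp0def, hp1def, Function.update_apply, hu, hv, hdiag] <;> ring
      rw [haff]
      have h0le : 0 ≤ p v0 := (hp v0).1
      have h1le : 0 ≤ 1 - p v0 := by linarith [(hp v0).2]
      calc (1 - p v0) * Ew w p0 + p v0 * Ew w p1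
          ≤ (1 - p v0) * mac w + p v0 * mac w :=
            add_le_add (mul_le_mul_of_nonneg_left hE0 h1le)
              (mul_le_mul_of_nonneg_left hE1 h0le)
        _ = mac w := by ring

lemma sum_expand (w : V → V → ℝ) (χ : V → ℝ) (x y : ℝ) :
    Ew w (fun v => x + y * χ v)
      = x*(1-x) * (∑ u, ∑ v, w u v) + y*(1-x)*(∑ u, ∑ v, χ u * w u v)
        - x*y*(∑ u, ∑ v, χ v * w u v) - y^2 * (∑ u, ∑ v, χ u * χ v * w u v) := by
  unfold Ew
  simp only [Finset.mul_sum, ← Finset.sum_sub_distrib, ← Finset.sum_add_distrib]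
  refine Finset.sum_congr rfl fun u _ => ?_
  refine Finset.sum_congr rfl fun v _ => ?_
  ring

set_option maxHeartbeats 1600000 in
theorem mac_ge_lfun_theta {V : Type*} [Fintype V] [Nonempty V]
    (w : V → V → ℝ) (hnn : ∀ u v, 0 ≤ w u v) (hdiag : ∀ v, w v v = 0)
    (hpos : 0 < totalWeight w) :
    lfun (rPlus w / totalWeight w) * totalWeight w ≤ mac w := by
  classical
  simp only [totalWeight] at hpos ⊢
  obtain ⟨χ, hχdef⟩ : ∃ χ : V → ℝ, χ = fun v => if 0 < rv w v then 1 else 0 := ⟨_, rfl⟩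
  have hχ01 : ∀ v, χ v = 0 ∨ χ v = 1 := fun v => by
    by_cases h : 0 < rv w v <;> simp [hχdef, h]
  have hχnn : ∀ v, 0 ≤ χ v ∧ χ v ≤ 1 := fun v => by
    rcases hχ01 v with h | h <;> rw [h] <;> norm_num
  obtain ⟨W, hWdef⟩ : ∃ W : ℝ, W = ∑ u, ∑ v, w u v := ⟨_, rfl⟩
  obtain ⟨A, hAdef⟩ : ∃ A : ℝ, A = ∑ u, ∑ v, χ u * w u v := ⟨_, rfl⟩
  obtain ⟨B, hBdef⟩ : ∃ B : ℝ, B = ∑ u, ∑ v, χ v * w u v := ⟨_, rfl⟩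
  obtain ⟨C, hCdef⟩ : ∃ C : ℝ, C = ∑ u, ∑ v, χ u * χ v * w u v := ⟨_, rfl⟩
  rw [← hWdef] at hpos ⊢
  have hRA : rPlus w = A - B := by
    have hA' : A = ∑ u, χ u * ∑ v, w u v := by
      rw [hAdef]; exact Finset.sum_congr rfl fun u _ => (Finset.mul_sum _ _ _).symm
    have hB' : B = ∑ v, χ v * ∑ u, w u v := by
      rw [hBdef, Finset.sum_comm]
      exact Finset.sum_congr rfl fun v _ => (Finset.mul_sum _ _ _).symm
    rw [rPlus, hA', hB', ← Finset.sum_sub_distrib, Finset.sum_filter]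
    refine Finset.sum_congr rfl fun v _ => ?_
    by_cases h : 0 < rv w v
    · simp only [hχdef, h, if_true, if_pos h]
      simp only [rv]; ring
    · simp only [hχdef, h, if_false, if_neg h]; ring
  have hR0 : 0 ≤ A - B := by
    rw [← hRA]
    exact Finset.sum_nonneg fun v hv => (Finset.mem_filter.mp hv).2.le
  have hCB : C ≤ B := by
    rw [hBdef, hCdef]
    refine Finset.sum_le_sum fun u _ => Finset.sum_le_sum fun v _ => ?_
    nlinarith [hχnn u, hχnn v, hnn u v,
      mul_nonneg (mul_nonneg (sub_nonneg.mpr (hχnn u).2) (hχnn v).1) (hnn u v)]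
  have hmac1 : A - C ≤ mac w := by
    have h := sum_expand w χ 0 1
    have hfn : (fun v => (0:ℝ) + 1 * χ v) = χ := by funext v; ring
    rw [hfn] at h
    have hE := Ew_le_mac w hdiag χ hχnn
    rw [h, ← hWdef, ← hAdef, ← hBdef, ← hCdef] at hE
    linarith [hE]
  rw [hRA]
  by_cases hθ : (A - B) / W < 1/3
  · rw [lfun, if_pos hθ]
    have hRW : A - B < W/3 := by
      have := (div_lt_iff₀ hpos).mp hθ; linarith
    have hW2R : 0 < W - 2*(A-B) := by linarith
    have hlval : (1/4 + ((A-B)/W)^2 / (4*(1 - 2*((A-B)/W)))) * W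
        = W/4 + (A-B)^2/(4*(W-2*(A-B))) := by
      have h1 : (0:ℝ) < 1 - 2*((A-B)/W) := by
        have h2 : (A-B)/W < 1/3 := hθ
        linarith
      field_simp
    rw [hlval]
    by_cases hU : W - 2*(A + B - 2*C) ≤ A - B
    · have h2 : (A-B)^2/(4*(W-2*(A-B))) ≤ (A-B)/4 := by
        rw [div_le_div_iff₀ (by linarith) (by norm_num)]
        nlinarith [hR0, hRW]
      linarith [hmac1, hU, h2]
    · push_neg at hU
      have hU0 : (0:ℝ) < W - 2*(A + B - 2*C) := lt_of_le_of_lt hR0 hU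
      obtain ⟨U, hUdef⟩ : ∃ U : ℝ, U = W - 2*(A + B - 2*C) := ⟨_, rfl⟩
      rw [← hUdef] at hU hU0
      obtain ⟨π, hπdef⟩ : ∃ π : ℝ, π = (U + (A-B))/(2*U) := ⟨_, rfl⟩
      have hπ1 : π ≤ 1 := by
        rw [hπdef, div_le_one (by linarith)]; linarith
      have hπh : 1/2 ≤ π := by
        rw [hπdef, le_div_iff₀ (by linarith)]; linarith
      have hp : ∀ v, 0 ≤ (1-π) + (2*π-1) * χ v ∧ (1-π) + (2*π-1)*χ v ≤ 1 := by
        intro v; rcases hχ01 v with h | h <;> rw [h] <;> constructor <;> nlinarith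
      have hm := Ew_le_mac w hdiag (fun v => (1-π) + (2*π-1) * χ v) hp
      rw [sum_expand w χ (1-π) (2*π-1), ← hWdef, ← hAdef, ← hBdef, ← hCdef] at hm
      have hU0' : U ≠ 0 := ne_of_gt (by linarith)
      have hstep : (1-π)*(1-(1-π))*W + (2*π-1)*(1-(1-π))*A
          - (1-π)*(2*π-1)*B - (2*π-1)^2*C
          = -(W - 2*(A+B-2*C))*π^2 + ((W - 2*(A+B-2*C)) + (A-B))*π + (B-C) := by
        ring
      have e1 : -U*π^2 + (U + (A-B))*π + (B-C) = (U + (A-B))^2/(4*U) + (B - C) := by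
        rw [hπdef]
        field_simp
        ring
      have e2 : (U + (A-B))^2/(4*U) + (B-C) = W/4 + (A-B)^2/(4*U) := by
        have e3 : (U + (A-B))^2/(4*U) = U/4 + (A-B)/2 + (A-B)^2/(4*U) := by
          field_simp
          ring
        rw [e3, hUdef]; ring
      have hid : (1-π)*(1-(1-π))*W + (2*π-1)*(1-(1-π))*A
          - (1-π)*(2*π-1)*B - (2*π-1)^2*C = W/4 + (A-B)^2/(4*U) := by
        rw [hstep, ← hUdef, e1, e2]
      rw [hid] at hm
      have hUle : U ≤ W - 2*(A-B) := by rw [hUdef]; linarith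
      have hmono : (A-B)^2/(4*(W-2*(A-B))) ≤ (A-B)^2/(4*U) := by
        gcongr
      linarith [hm, hmono]
  · rw [lfun, if_neg hθ, div_mul_cancel₀ _ (ne_of_gt hpos)]
    linarith [hmac1, hCB]

end PaperStmt
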